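/- Let μ be a Borel measure on (0,∞) with ∫_{(0,∞)} min(x, x²) μ(dx) < ∞, γ ≥ 0, ψ₀(θ) = γ²θ² + ∫_{(0,∞)} (e^{−θx} − 1 + θx) μ(dx), and Φ(θ) = ψ₀(θ)/θ for θ > 0, Φ(0) = 0. Let t > 0, λ > 0, let K : [0,t] → ℝ be continuous, and let v : [0,t] → (0,λ] be differentiable with v(t) = λ and v'(s) = e^{K(s)} ψ₀(v(s) e^{−K(s)}) for all s ∈ [0,t]. Then for every s ∈ [0,t], v(s) ≥ λ · exp( −∫_s^t Φ(λ e^{−K(r)}) dr ). -/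

import Mathlib

open Real MeasureTheory Set

/-! Since `θ ↦ e^{-θx} - 1 + θx` is convex and vanishes at `0`, its slope `θ ↦ (e^{-θx} - 1 + θx)/θ`
is nondecreasing, hence so is `Φ = ψ₀(θ)/θ`. As `v ≤ λ`, the equation gives
`v' = v Φ(v e^{-K}) ≤ v Φ(λ e^{-K})`, so `v(s) exp(-∫_t^s Φ(λ e^{-K}))` is nonincreasing on `[0, t]`;
comparing its values at `s` and `t` is the claim. -/

/-- The branching mechanism `ψ₀` with Gaussian coefficient `γ` and Lévy measure `μ` on `(0, ∞)`. -/
noncomputable def branchingMechanism (μ : Measure ℝ) (γ θ : ℝ) : ℝ :=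
  γ ^ 2 * θ ^ 2 + ∫ x in Ioi (0:ℝ), (exp (-θ * x) - 1 + θ * x) ∂μ

lemma exp_neg_sub_one_add_nonneg (u : ℝ) : 0 ≤ exp (-u) - 1 + u := by
  linarith [add_one_le_exp (-u)]

lemma exp_neg_sub_one_add_le_min {u : ℝ} (hu : 0 ≤ u) : exp (-u) - 1 + u ≤ min u (u ^ 2) := by
  have hle : exp (-u) - 1 + u ≤ u := by linarith [exp_le_one_iff.mpr (neg_nonpos.mpr hu)]
  refine le_min hle ?_
  rcases le_total u 1 with hu1 | hu1
  · have := abs_exp_sub_one_sub_id_le (x := -u) (by rwa [abs_neg, abs_of_nonneg hu])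
    rw [neg_sq] at this
    linarith [le_abs_self (exp (-u) - 1 - -u)]
  · nlinarith

lemma norm_exp_neg_mul_sub_one_add_mul_le {θ x : ℝ} (hθ : 0 ≤ θ) (hx : 0 ≤ x) :
    ‖exp (-θ * x) - 1 + θ * x‖ ≤ max θ (θ ^ 2) * min x (x ^ 2) := by
  rw [neg_mul, norm_of_nonneg (exp_neg_sub_one_add_nonneg _),
    mul_min_of_nonneg _ _ (le_max_of_le_left hθ)]
  refine (exp_neg_sub_one_add_le_min (mul_nonneg hθ hx)).trans (min_le_min ?_ ?_)
  · exact mul_le_mul_of_nonneg_right (le_max_left _ _) hx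
  · rw [mul_pow]
    exact mul_le_mul_of_nonneg_right (le_max_right _ _) (sq_nonneg x)

lemma integrableOn_exp_neg_mul_sub_one_add_mul {μ : Measure ℝ}
    (hμ : IntegrableOn (fun x => min x (x ^ 2)) (Ioi 0) μ) {θ : ℝ} (hθ : 0 ≤ θ) :
    IntegrableOn (fun x => exp (-θ * x) - 1 + θ * x) (Ioi 0) μ := by
  refine (hμ.const_mul (max θ (θ ^ 2))).mono' (by fun_prop) ?_
  exact (ae_restrict_iff' measurableSet_Ioi).mpr
    (.of_forall fun x hx => norm_exp_neg_mul_sub_one_add_mul_le hθ (le_of_lt hx))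

lemma mul_exp_neg_mul_sub_one_add_mul_le {a b x : ℝ} (ha : 0 < a) (hab : a ≤ b) :
    b * (exp (-a * x) - 1 + a * x) ≤ a * (exp (-b * x) - 1 + b * x) := by
  have hb : 0 < b := ha.trans_le hab
  -- `exp (-a * x)` lies below the chord of `exp` over `[-b * x, 0]`
  have hconv := convexOn_exp.2 (mem_univ (-b * x)) (mem_univ 0) (div_pos ha hb).le
    (sub_nonneg.mpr ((div_le_one hb).mpr hab)) (add_sub_cancel _ 1)
  rw [smul_eq_mul, smul_eq_mul, smul_eq_mul, smul_eq_mul, mul_zero, add_zero, exp_zero, mul_one,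
    show a / b * (-b * x) = -a * x by field_simp] at hconv
  have : b * exp (-a * x) ≤ a * exp (-b * x) + (b - a) :=
    calc b * exp (-a * x) ≤ b * (a / b * exp (-b * x) + (1 - a / b)) := by gcongr
      _ = a * exp (-b * x) + (b - a) := by field_simp
  linarith

lemma mul_branchingMechanism_le {μ : Measure ℝ} (γ : ℝ)
    (hμ : IntegrableOn (fun x => min x (x ^ 2)) (Ioi 0) μ) {a b : ℝ} (ha : 0 < a) (hab : a ≤ b) :
    b * branchingMechanism μ γ a ≤ a * branchingMechanism μ γ b := by
  have hb : 0 < b := ha.trans_le hab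
  have hint : b * ∫ x in Ioi (0:ℝ), (exp (-a * x) - 1 + a * x) ∂μ
      ≤ a * ∫ x in Ioi (0:ℝ), (exp (-b * x) - 1 + b * x) ∂μ := by
    rw [← integral_const_mul, ← integral_const_mul]
    exact setIntegral_mono_on ((integrableOn_exp_neg_mul_sub_one_add_mul hμ ha.le).const_mul b)
      ((integrableOn_exp_neg_mul_sub_one_add_mul hμ hb.le).const_mul a) measurableSet_Ioi
      fun x _ => mul_exp_neg_mul_sub_one_add_mul_le ha hab
  have hgauss : 0 ≤ γ ^ 2 * (a * b) * (b - a) :=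
    mul_nonneg (mul_nonneg (sq_nonneg γ) (mul_pos ha hb).le) (sub_nonneg.mpr hab)
  unfold branchingMechanism
  linarith

lemma exp_mul_branchingMechanism_le {μ : Measure ℝ} (γ : ℝ)
    (hμ : IntegrableOn (fun x => min x (x ^ 2)) (Ioi 0) μ) {v lam : ℝ} (k : ℝ)
    (hv : 0 < v) (hvlam : v ≤ lam) :
    exp k * branchingMechanism μ γ (v * exp (-k)) ≤
      v * (branchingMechanism μ γ (lam * exp (-k)) / (lam * exp (-k))) := by
  have ha : 0 < v * exp (-k) := by positivity
  have hab : v * exp (-k) ≤ lam * exp (-k) := mul_le_mul_of_nonneg_right hvlam (exp_pos _).le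
  have hb : 0 < lam * exp (-k) := ha.trans_le hab
  calc exp k * branchingMechanism μ γ (v * exp (-k))
      = v * (branchingMechanism μ γ (v * exp (-k)) / (v * exp (-k))) := by
        rw [exp_neg]; field_simp
    _ ≤ v * (branchingMechanism μ γ (lam * exp (-k)) / (lam * exp (-k))) := by
        refine mul_le_mul_of_nonneg_left ?_ hv.le
        rw [div_le_div_iff₀ ha hb]
        linarith [mul_branchingMechanism_le γ hμ ha hab]

lemma continuousOn_branchingMechanism {μ : Measure ℝ} (γ : ℝ)
    (hμ : IntegrableOn (fun x => min x (x ^ 2)) (Ioi 0) μ) :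
    ContinuousOn (branchingMechanism μ γ) (Ioi 0) := by
  intro y hy
  refine ContinuousAt.continuousWithinAt ?_
  have hint : ContinuousAt (fun θ => ∫ x in Ioi (0:ℝ), (exp (-θ * x) - 1 + θ * x) ∂μ) y := by
    refine continuousAt_of_dominated (bound := fun x => max (y + 1) ((y + 1) ^ 2) * min x (x ^ 2))
      (.of_forall fun θ => by fun_prop) ?_ (hμ.const_mul _) (.of_forall fun x => by fun_prop)
    filter_upwards [Ioo_mem_nhds hy (lt_add_one y)] with θ hθ
    refine (ae_restrict_iff' measurableSet_Ioi).mpr (.of_forall fun x hx => ?_)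
    refine (norm_exp_neg_mul_sub_one_add_mul_le hθ.1.le (le_of_lt hx)).trans ?_
    have : 0 ≤ min x (x ^ 2) := le_min (le_of_lt hx) (sq_nonneg x)
    gcongr <;> linarith [hθ.1, hθ.2]
  exact (by fun_prop : Continuous fun θ : ℝ => γ ^ 2 * θ ^ 2).continuousAt.add hint

theorem mul_exp_neg_integral_le_of_hasDerivWithinAt_le {v v' φ : ℝ → ℝ} {a b : ℝ}
    (hφ : ContinuousOn φ (Icc a b))
    (hv : ∀ s ∈ Icc a b, HasDerivWithinAt v (v' s) (Icc a b) s)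
    (hle : ∀ s ∈ Ioo a b, v' s ≤ v s * φ s) :
    ∀ s ∈ Icc a b, v b * exp (-∫ r in s..b, φ r) ≤ v s := by
  intro s hs
  have hb : b ∈ Icc a b := right_mem_Icc.mpr (hs.1.trans hs.2)
  set F : ℝ → ℝ := fun u => ∫ r in b..u, φ r
  have hF : ∀ u ∈ Icc a b, HasDerivWithinAt F (φ u) (Icc a b) u := fun u hu => by
    have : Fact (u ∈ Icc a b) := ⟨hu⟩
    exact intervalIntegral.integral_hasDerivWithinAt_right
      (hφ.mono (uIcc_subset_Icc hb hu)).intervalIntegrable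
      (hφ.stronglyMeasurableAtFilter_nhdsWithin measurableSet_Icc u) (hφ u hu)
  have hw : ∀ u ∈ Icc a b, HasDerivWithinAt (fun u => v u * exp (-F u))
      (v' u * exp (-F u) + v u * (exp (-F u) * -φ u)) (Icc a b) u :=
    fun u hu => (hv u hu).mul (hF u hu).neg.exp
  have hanti : AntitoneOn (fun u => v u * exp (-F u)) (Icc a b) := by
    refine antitoneOn_of_hasDerivWithinAt_nonpos (convex_Icc a b)
      (fun u hu => (hw u hu).continuousWithinAt)
      (fun u hu => (hw u (interior_subset hu)).mono interior_subset) fun u hu => ?_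
    rw [interior_Icc] at hu
    have := mul_le_mul_of_nonneg_right (hle u hu) (exp_pos (-F u)).le
    linarith
  have hvb : v b ≤ v s * exp (∫ r in s..b, φ r) := by
    simpa [F, intervalIntegral.integral_symm b s] using hanti hs hb hs.2
  calc v b * exp (-∫ r in s..b, φ r)
      ≤ v s * exp (∫ r in s..b, φ r) * exp (-∫ r in s..b, φ r) := by gcongr
    _ = v s := by rw [mul_assoc, ← exp_add, add_neg_cancel, exp_zero, mul_one]

theorem stmt_12_general (μ : Measure ℝ) (γ : ℝ)
    (hμ : IntegrableOn (fun x => min x (x ^ 2)) (Set.Ioi 0) μ)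
    (ψ₀ Φ : ℝ → ℝ)
    (hψ : ∀ θ, ψ₀ θ = γ ^ 2 * θ ^ 2 +
      ∫ x in Set.Ioi (0:ℝ), (Real.exp (-θ * x) - 1 + θ * x) ∂μ)
    (hΦ : ∀ θ > (0:ℝ), Φ θ = ψ₀ θ / θ)
    (t lam : ℝ) (hlam : 0 < lam)
    (K : ℝ → ℝ) (hK : ContinuousOn K (Set.Icc 0 t))
    (v : ℝ → ℝ)
    (hvmem : ∀ s ∈ Set.Icc (0:ℝ) t, v s ∈ Set.Ioc 0 lam)
    (hvt : v t = lam)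
    (hv : ∀ s ∈ Set.Icc (0:ℝ) t,
      HasDerivWithinAt v (Real.exp (K s) * ψ₀ (v s * Real.exp (-K s)))
        (Set.Icc 0 t) s) :
    ∀ s ∈ Set.Icc (0:ℝ) t,
      lam * Real.exp (-∫ r in s..t, Φ (lam * Real.exp (-K r))) ≤ v s := by
  obtain rfl : ψ₀ = branchingMechanism μ γ := funext hψ
  have hΦ_cont : ContinuousOn Φ (Ioi 0) :=
    ((continuousOn_branchingMechanism γ hμ).div continuousOn_id fun θ hθ => ne_of_gt hθ).congr
      fun θ hθ => hΦ θ hθ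
  have hφ : ContinuousOn (fun r => Φ (lam * exp (-K r))) (Icc 0 t) :=
    hΦ_cont.comp (continuousOn_const.mul (hK.neg.rexp)) fun r _ => mem_Ioi.mpr (by positivity)
  have hcomp := mul_exp_neg_integral_le_of_hasDerivWithinAt_le hφ hv fun s hs => by
    obtain ⟨hv0, hvlam⟩ := hvmem s (Ioo_subset_Icc_self hs)
    rw [hΦ _ (by positivity)]
    exact exp_mul_branchingMechanism_le γ hμ (K s) hv0 hvlam
  rwa [hvt] at hcomp

theorem stmt_12 (μ : Measure ℝ) (γ : ℝ) (hγ : 0 ≤ γ)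
    (hμ : IntegrableOn (fun x => min x (x ^ 2)) (Set.Ioi 0) μ)
    (ψ₀ Φ : ℝ → ℝ)
    (hψ : ∀ θ, ψ₀ θ = γ ^ 2 * θ ^ 2 +
      ∫ x in Set.Ioi (0:ℝ), (Real.exp (-θ * x) - 1 + θ * x) ∂μ)
    (hΦ : ∀ θ > (0:ℝ), Φ θ = ψ₀ θ / θ) (hΦ0 : Φ 0 = 0)
    (t lam : ℝ) (ht : 0 < t) (hlam : 0 < lam)
    (K : ℝ → ℝ) (hK : ContinuousOn K (Set.Icc 0 t))
    (v : ℝ → ℝ)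
    (hvmem : ∀ s ∈ Set.Icc (0:ℝ) t, v s ∈ Set.Ioc 0 lam)
    (hvt : v t = lam)
    (hv : ∀ s ∈ Set.Icc (0:ℝ) t,
      HasDerivWithinAt v (Real.exp (K s) * ψ₀ (v s * Real.exp (-K s)))
        (Set.Icc 0 t) s) :
    ∀ s ∈ Set.Icc (0:ℝ) t,
      lam * Real.exp (-∫ r in s..t, Φ (lam * Real.exp (-K r))) ≤ v s :=
  stmt_12_general μ γ hμ ψ₀ Φ hψ hΦ t lam hlam K hK v hvmem hvt hv
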